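/- Let G be a mixed graph, X a vertex with topological order ≺, and I, R ancestral c-components relative to X with I ⊆ R. For any set Z with Pa(I) \ {X} ⊆ Z ⊆ Pa(R) \ {X}, the c-component of X in the induced subgraph on An(I ∪ Z) ∩ V^{≤X} is an ancestral c-component C relative to X satisfying I ⊆ C ⊆ R. -/
import Mathlib


/-- A mixed graph: directed edges and (symmetric) bidirected edges. -/
structure MixedGraph (V : Type) where
  dir : V → V → Prop
  bi : V → V → Prop
  bi_symm : ∀ a b, bi a b → bi b a

namespace MixedGraph

variable {V : Type}

/-- `G.anc x y` : `x` is an ancestor of `y` (directed path, possibly trivial). -/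
def anc (G : MixedGraph V) : V → V → Prop := Relation.ReflTransGen G.dir

/-- Ancestors of a set (including the set itself). -/
def An (G : MixedGraph V) (S : Set V) : Set V := {v | ∃ s ∈ S, G.anc v s}

/-- A set is ancestral if it contains all ancestors of its elements. -/
def Ancestral (G : MixedGraph V) (S : Set V) : Prop := G.An S = S

/-- Descendants of a set (including the set itself). -/
def De (G : MixedGraph V) (S : Set V) : Set V := {v | ∃ s ∈ S, G.anc s v}

/-- `Pa(C)`: `C` together with the directed parents of members of `C`. -/
def Pa (G : MixedGraph V) (C : Set V) : Set V := C ∪ {p | ∃ c ∈ C, G.dir p c}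

/-- `Spo(C)`: vertices joined by a bidirected edge to some vertex of `C`. -/
def Spo (G : MixedGraph V) (C : Set V) : Set V := {y | ∃ c ∈ C, G.bi y c}

/-- Connectivity by a path of bidirected edges lying inside `S`. -/
def biConn (G : MixedGraph V) (S : Set V) : V → V → Prop :=
  Relation.ReflTransGen (fun a b => G.bi a b ∧ a ∈ S ∧ b ∈ S)

/-- The c-component of `x` in the induced subgraph on `S`. -/
def cc (G : MixedGraph V) (S : Set V) (x : V) : Set V := {y | G.biConn S x y}

/-- The ordering on `V` is a topological ordering of the directed part of `G`. -/
def TopoOrder (G : MixedGraph V) [LinearOrder V] : Prop := ∀ a b, G.dir a b → a < b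

/-- Ancestral c-component relative to `X` (w.r.t. the linear order on `V`). -/
def IsACC (G : MixedGraph V) [LinearOrder V] (X : V) (C : Set V) : Prop :=
  ∃ S : Set V, G.Ancestral S ∧ S ⊆ {y | y ≤ X} ∧ X ∈ S ∧ G.cc S X = C

/-- `S⁺ = V^{≤X} \ De(Spo(C) \ Pa(C))`. -/
def Splus (G : MixedGraph V) [LinearOrder V] (X : V) (C : Set V) : Set V :=
  {y | y ≤ X} \ G.De (G.Spo C \ G.Pa C)

end MixedGraph


namespace MixedGraph

lemma cc_subset {V : Type} (G : MixedGraph V) {S : Set V} {x : V} (hx : x ∈ S) :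
    G.cc S x ⊆ S := by
  intro y hy
  induction hy with
  | refl => exact hx
  | tail _ h _ => exact h.2.2

lemma biConn_mono {V : Type} (G : MixedGraph V) {S T : Set V} (hST : S ⊆ T)
    {x y : V} (h : G.biConn S x y) : G.biConn T x y := by
  induction h with
  | refl => exact Relation.ReflTransGen.refl
  | tail _ h ih => exact ih.tail ⟨h.1, hST h.2.1, hST h.2.2⟩

lemma anc_le {V : Type} [LinearOrder V] {G : MixedGraph V} (htopo : G.TopoOrder)
    {v s : V} (h : G.anc v s) : v ≤ s := by
  induction h with
  | refl => exact le_refl v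
  | tail _ h ih => exact le_trans ih (le_of_lt (htopo _ _ h))

end MixedGraph

/-- For ancestral c-components `I ⊆ R` relative to `X` and any `Z` with
`Pa(I) \ {X} ⊆ Z ⊆ Pa(R) \ {X}`, the c-component of `X` in the induced subgraph
on `An(I ∪ Z) ∩ V^{≤X}` is an ancestral c-component `C` relative to `X`
with `I ⊆ C ⊆ R`. -/
theorem stmt16 {V : Type} [LinearOrder V] (G : MixedGraph V) (htopo : G.TopoOrder)
    (X : V) (I R : Set V) (hI : G.IsACC X I) (hR : G.IsACC X R) (hIR : I ⊆ R)
    (Z : Set V) (hZ₁ : G.Pa I \ {X} ⊆ Z) (hZ₂ : Z ⊆ G.Pa R \ {X}) :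
    G.IsACC X (G.cc (G.An (I ∪ Z) ∩ {y | y ≤ X}) X) ∧
    I ⊆ G.cc (G.An (I ∪ Z) ∩ {y | y ≤ X}) X ∧
    G.cc (G.An (I ∪ Z) ∩ {y | y ≤ X}) X ⊆ R := by
  obtain ⟨SI, hSIa, hSIle, hXSI, hccI⟩ := hI
  obtain ⟨SR, hSRa, hSRle, hXSR, hccR⟩ := hR
  set T : Set V := G.An (I ∪ Z) ∩ {y | y ≤ X} with hT
  have hIsub : I ⊆ SI := hccI ▸ G.cc_subset hXSI
  have hRsub : R ⊆ SR := hccR ▸ G.cc_subset hXSR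
  -- I ⊆ T
  have hIT : I ⊆ T := by
    intro i hi
    exact ⟨⟨i, Or.inl hi, Relation.ReflTransGen.refl⟩, hSIle (hIsub hi)⟩
  have hXI : X ∈ I := hccI ▸ (show X ∈ G.cc SI X from Relation.ReflTransGen.refl)
  have hXT : X ∈ T := hIT hXI
  -- T is ancestral
  have hTanc : G.Ancestral T := by
    apply Set.Subset.antisymm
    · rintro v ⟨s, ⟨⟨w, hw, hsw⟩, hsX⟩, hvs⟩
      exact ⟨⟨w, hw, hvs.trans hsw⟩, le_trans (MixedGraph.anc_le htopo hvs) hsX⟩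
    · intro v hv
      exact ⟨v, hv, Relation.ReflTransGen.refl⟩
  -- T ⊆ SR
  have hIZSR : I ∪ Z ⊆ SR := by
    rintro v (hv | hv)
    · exact hRsub (hIR hv)
    · rcases (hZ₂ hv).1 with h | ⟨c, hc, hdir⟩
      · exact hRsub h
      · have : v ∈ G.An SR := ⟨c, hRsub hc, Relation.ReflTransGen.single hdir⟩
        exact hSRa ▸ this
  have hTSR : T ⊆ SR := by
    rintro v ⟨⟨s, hs, hvs⟩, _⟩
    have : v ∈ G.An SR := ⟨s, hIZSR hs, hvs⟩
    exact hSRa ▸ this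
  refine ⟨⟨T, hTanc, fun y hy => hy.2, hXT, rfl⟩, ?_, ?_⟩
  · -- I ⊆ cc T X
    intro i hi
    have hbc : G.biConn SI X i := by rw [← hccI] at hi; exact hi
    clear hi
    induction hbc with
    | refl => exact Relation.ReflTransGen.refl
    | @tail b c hXb h ih =>
      have hbI : b ∈ I := hccI ▸ (show b ∈ G.cc SI X from hXb)
      have hcI : c ∈ I := hccI ▸ (show c ∈ G.cc SI X from Relation.ReflTransGen.tail hXb h)
      exact ih.tail ⟨h.1, hIT hbI, hIT hcI⟩
  · -- cc T X ⊆ R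
    intro y hy
    exact hccR ▸ (show y ∈ G.cc SR X from G.biConn_mono hTSR hy)
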